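/- Let ν, κ, λ be real constants with λ ≠ 0, and let f : ℝ × ℝ × ℝ → ℝ be a four times continuously differentiable solution of the (2+1)-dimensional Kuramoto–Sivashinsky equation. Then for every s ∈ ℝ the Galilean-boosted function (x,y,t) ↦ f(x, y + s·t, t) + (2·y·s + t·s²)/(4λ) is again a solution of the Kuramoto–Sivashinsky equation. (Invariance under the one-parameter group G₇ generated by the Galilean boost V₇ = t∂ᵧ + (y/(2λ))∂ₕ.) -/

import Mathlib

noncomputable section

/-- Partial derivative in the first (x) variable. -/
def Dx (h : ℝ × ℝ × ℝ → ℝ) : ℝ × ℝ × ℝ → ℝ :=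
  fun p => deriv (fun x : ℝ => h (x, p.2.1, p.2.2)) p.1

/-- Partial derivative in the second (y) variable. -/
def Dy (h : ℝ × ℝ × ℝ → ℝ) : ℝ × ℝ × ℝ → ℝ :=
  fun p => deriv (fun y : ℝ => h (p.1, y, p.2.2)) p.2.1

/-- Partial derivative in the third (t) variable. -/
def Dt (h : ℝ × ℝ × ℝ → ℝ) : ℝ × ℝ × ℝ → ℝ :=
  fun p => deriv (fun t : ℝ => h (p.1, p.2.1, t)) p.2.2

/-- The left-hand side of the (2+1)-dimensional Kuramoto–Sivashinsky equation:
∂ₜh + ν(∂ₓₓh + ∂ᵧᵧh) + κ(∂ₓₓₓₓh + 2∂ₓₓᵧᵧh + ∂ᵧᵧᵧᵧh) − λ((∂ₓh)² + (∂ᵧh)²). -/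
def KSLhs (ν κ lam : ℝ) (h : ℝ × ℝ × ℝ → ℝ) : ℝ × ℝ × ℝ → ℝ :=
  fun p =>
    Dt h p + ν * (Dx (Dx h) p + Dy (Dy h) p)
      + κ * (Dx (Dx (Dx (Dx h))) p + 2 * Dx (Dx (Dy (Dy h))) p + Dy (Dy (Dy (Dy h))) p)
      - lam * ((Dx h p) ^ 2 + (Dy h p) ^ 2)

/-- A C⁴ solution of the (2+1)-dimensional Kuramoto–Sivashinsky equation. -/
def IsKSSolution (ν κ lam : ℝ) (h : ℝ × ℝ × ℝ → ℝ) : Prop :=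
  ContDiff ℝ 4 h ∧ ∀ p : ℝ × ℝ × ℝ, KSLhs ν κ lam h p = 0

/-!
The boost `(x, y, t) ↦ (x, y + s t, t)` commutes with `∂ₓ` and `∂ᵧ` and turns `∂ₜ` into
`∂ₜ + s ∂ᵧ`, so it adds `s ∂ᵧf` to the K-S operator. Adding an affine term `a y + b t` shifts `∂ᵧ`
by `a` and `∂ₜ` by `b`, which adds `b - λ (2 a ∂ᵧh + a²)`. For `a = s / (2λ)`, `b = s² / (4λ)`
the two corrections cancel.
-/

def galileanBoost (s : ℝ) (p : ℝ × ℝ × ℝ) : ℝ × ℝ × ℝ :=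
  (p.1, p.2.1 + s * p.2.2, p.2.2)

section PartialDerivatives

variable {u : ℝ × ℝ × ℝ → ℝ}

lemma Dy_eq_fderiv_apply {q : ℝ × ℝ × ℝ} (hu : DifferentiableAt ℝ u q) :
    Dy u q = fderiv ℝ u q (0, 1, 0) := by
  have hline : HasDerivAt (fun y : ℝ => (q.1, y, q.2.2)) ((0 : ℝ), (1 : ℝ), (0 : ℝ)) q.2.1 :=
    (hasDerivAt_const _ _).prodMk ((hasDerivAt_id _).prodMk (hasDerivAt_const _ _))
  exact (hu.hasFDerivAt.comp_hasDerivAt q.2.1 hline).deriv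

lemma Dt_eq_fderiv_apply {q : ℝ × ℝ × ℝ} (hu : DifferentiableAt ℝ u q) :
    Dt u q = fderiv ℝ u q (0, 0, 1) := by
  have hline : HasDerivAt (fun t : ℝ => (q.1, q.2.1, t)) ((0 : ℝ), (0 : ℝ), (1 : ℝ)) q.2.2 :=
    (hasDerivAt_const _ _).prodMk ((hasDerivAt_const _ _).prodMk (hasDerivAt_id _))
  exact (hu.hasFDerivAt.comp_hasDerivAt q.2.2 hline).deriv

lemma Dx_comp_galileanBoost (s : ℝ) :
    Dx (u ∘ galileanBoost s) = Dx u ∘ galileanBoost s :=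
  rfl

lemma Dy_comp_galileanBoost (s : ℝ) :
    Dy (u ∘ galileanBoost s) = Dy u ∘ galileanBoost s := by
  funext p
  exact deriv_comp_add_const (fun y => u (p.1, y, p.2.2)) (s * p.2.2) p.2.1

lemma Dt_comp_galileanBoost (hu : Differentiable ℝ u) (s : ℝ) (p : ℝ × ℝ × ℝ) :
    Dt (u ∘ galileanBoost s) p = s * Dy u (galileanBoost s p) + Dt u (galileanBoost s p) := by
  have hline : HasDerivAt (fun t : ℝ => galileanBoost s (p.1, p.2.1, t)) (0, s, 1) p.2.2 := by
    simpa [galileanBoost] using (hasDerivAt_const p.2.2 p.1).prodMk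
      ((((hasDerivAt_id p.2.2).const_mul s).const_add p.2.1).prodMk (hasDerivAt_id p.2.2))
  have hdir : ((0 : ℝ), s, (1 : ℝ)) = s • ((0 : ℝ), (1 : ℝ), (0 : ℝ)) + (0, 0, 1) := by simp
  rw [Dy_eq_fderiv_apply (hu _), Dt_eq_fderiv_apply (hu _), ← smul_eq_mul, ← map_smul, ← map_add,
    ← hdir]
  exact ((hu _).hasFDerivAt.comp_hasDerivAt p.2.2 hline).deriv

lemma Dy_add_const (c : ℝ) : Dy (fun p => u p + c) = Dy u := by
  funext p
  exact deriv_add_const c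

variable (a b : ℝ)

lemma Dx_add_affine :
    Dx (fun p => u p + (a * p.2.1 + b * p.2.2)) = Dx u := by
  funext p
  exact deriv_add_const (a * p.2.1 + b * p.2.2)

lemma Dy_add_affine (hu : Differentiable ℝ u) :
    Dy (fun p => u p + (a * p.2.1 + b * p.2.2)) = fun p => Dy u p + a := by
  funext p
  have hy : HasDerivAt (fun y : ℝ => a * y + b * p.2.2) a p.2.1 := by
    simpa using ((hasDerivAt_id p.2.1).const_mul a).add_const (b * p.2.2)
  have hu_line : DifferentiableAt ℝ (fun y : ℝ => u (p.1, y, p.2.2)) p.2.1 := by fun_prop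
  exact (hu_line.hasDerivAt.add hy).deriv

lemma Dt_add_affine (hu : Differentiable ℝ u) :
    Dt (fun p => u p + (a * p.2.1 + b * p.2.2)) = fun p => Dt u p + b := by
  funext p
  have ht : HasDerivAt (fun t : ℝ => a * p.2.1 + b * t) b p.2.2 := by
    simpa using ((hasDerivAt_id p.2.2).const_mul b).const_add (a * p.2.1)
  have hu_line : DifferentiableAt ℝ (fun t : ℝ => u (p.1, p.2.1, t)) p.2.2 := by fun_prop
  exact (hu_line.hasDerivAt.add ht).deriv

end PartialDerivatives

section KSLhs

variable (ν κ lam : ℝ) {u : ℝ × ℝ × ℝ → ℝ}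

lemma KSLhs_comp_galileanBoost (hu : Differentiable ℝ u) (s : ℝ) (p : ℝ × ℝ × ℝ) :
    KSLhs ν κ lam (u ∘ galileanBoost s) p
      = KSLhs ν κ lam u (galileanBoost s p) + s * Dy u (galileanBoost s p) := by
  simp only [KSLhs, Dt_comp_galileanBoost hu, Dx_comp_galileanBoost, Dy_comp_galileanBoost,
    Function.comp_apply]
  ring

lemma KSLhs_add_affine (hu : Differentiable ℝ u) (a b : ℝ) (p : ℝ × ℝ × ℝ) :
    KSLhs ν κ lam (fun q => u q + (a * q.2.1 + b * q.2.2)) p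
      = KSLhs ν κ lam u p + b - lam * (2 * a * Dy u p + a ^ 2) := by
  simp only [KSLhs, Dt_add_affine a b hu, Dx_add_affine, Dy_add_affine a b hu, Dy_add_const]
  ring

end KSLhs

/-- Invariance of the K-S solution set under the Galilean boost group G₇ generated by
V₇ = t∂ᵧ + (y/(2λ))∂ₕ. -/
theorem ks_invariance_G7 (ν κ lam : ℝ) (hlam : lam ≠ 0) (f : ℝ × ℝ × ℝ → ℝ)
    (hf : IsKSSolution ν κ lam f) (s : ℝ) :
    IsKSSolution ν κ lam
      (fun p => f (p.1, p.2.1 + s * p.2.2, p.2.2)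
        + (2 * p.2.1 * s + p.2.2 * s ^ 2) / (4 * lam)) := by
  obtain ⟨hf4, hf_eq⟩ := hf
  have hf_diff : Differentiable ℝ f := hf4.differentiable (by norm_num)
  have h_boost_diff : Differentiable ℝ (f ∘ galileanBoost s) :=
    hf_diff.comp (by unfold galileanBoost; fun_prop)
  refine ⟨by fun_prop, fun p => ?_⟩
  have h_affine : (fun p : ℝ × ℝ × ℝ => f (p.1, p.2.1 + s * p.2.2, p.2.2)
        + (2 * p.2.1 * s + p.2.2 * s ^ 2) / (4 * lam))
      = fun p => (f ∘ galileanBoost s) p + (s / (2 * lam) * p.2.1 + s ^ 2 / (4 * lam) * p.2.2) := by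
    funext p
    simp only [Function.comp_apply, galileanBoost]
    field_simp
    ring
  rw [h_affine, KSLhs_add_affine _ _ _ h_boost_diff, KSLhs_comp_galileanBoost _ _ _ hf_diff,
    hf_eq, Dy_comp_galileanBoost, Function.comp_apply]
  field_simp
  ring
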